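/- arXiv:2404.17135 — 3 statements merged into one kernel-verified Lean document; each statement's English description precedes it below -/
import Mathlib

section
/- Let S(M) be the unique solution of ∑_{k=2}^{M} (1/(k(k-1)))^s = 1 for integers M ≥ 2. Then S(M) → 1 as M → ∞. -/
open Filter Topology Real Set

/-!
Write `w k = 1 / (k (k - 1))`, so that `∑_{k=2}^M w k = 1 - 1/M` telescopes. Since every
`w k ∈ (0, 1]`, the sum `∑ w k ^ s` is antitone in `s`; at `s = 1` it is below `1`, so `S M < 1`.
For `t < 1` every term satisfies `w k ^ t ≥ w k`, and the first one gains the fixed amount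
`(1/2) ^ t - 1/2 > 0`, which beats the defect `1/M` once `M` is large; then `S M > t`.
-/

section SumRpow

variable {ι : Type*} {s : Finset ι} {f : ι → ℝ}

theorem Finset.sum_rpow_le_sum_rpow_of_exponent_ge (hpos : ∀ i ∈ s, 0 < f i)
    (hle : ∀ i ∈ s, f i ≤ 1) {a b : ℝ} (hab : a ≤ b) :
    ∑ i ∈ s, f i ^ b ≤ ∑ i ∈ s, f i ^ a :=
  Finset.sum_le_sum fun i hi => Real.rpow_le_rpow_of_exponent_ge (hpos i hi) (hle i hi) hab

theorem Finset.sum_add_rpow_sub_le_sum_rpow (hpos : ∀ i ∈ s, 0 < f i)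
    (hle : ∀ i ∈ s, f i ≤ 1) {t : ℝ} (ht : t ≤ 1) {j : ι} (hj : j ∈ s) :
    ∑ i ∈ s, f i + (f j ^ t - f j) ≤ ∑ i ∈ s, f i ^ t := by
  have hgain : ∀ i ∈ s, 0 ≤ f i ^ t - f i := fun i hi => by
    have := Real.rpow_le_rpow_of_exponent_ge (hpos i hi) (hle i hi) ht
    rw [Real.rpow_one] at this
    linarith
  have := Finset.single_le_sum hgain hj
  rw [Finset.sum_sub_distrib] at this
  linarith

end SumRpow

noncomputable def lurothWeight (k : ℕ) : ℝ := 1 / ((k : ℝ) * ((k : ℝ) - 1))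

theorem lurothWeight_pos {k : ℕ} (hk : 2 ≤ k) : 0 < lurothWeight k := by
  have : (2 : ℝ) ≤ k := by exact_mod_cast hk
  unfold lurothWeight
  have : 0 < (k : ℝ) * ((k : ℝ) - 1) := by nlinarith
  positivity

theorem lurothWeight_le_one {k : ℕ} (hk : 2 ≤ k) : lurothWeight k ≤ 1 := by
  have : (2 : ℝ) ≤ k := by exact_mod_cast hk
  unfold lurothWeight
  rw [div_le_one (by nlinarith)]
  nlinarith

theorem lurothWeight_two : lurothWeight 2 = 1 / 2 := by
  norm_num [lurothWeight]

theorem sum_lurothWeight {M : ℕ} (hM : 1 ≤ M) :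
    ∑ k ∈ Finset.Icc 2 M, lurothWeight k = 1 - 1 / M := by
  induction M, hM using Nat.le_induction with
  | base => simp
  | succ n hn ih =>
    rw [Finset.sum_Icc_succ_top (by omega), ih, lurothWeight]
    have : (n : ℝ) ≠ 0 := by positivity
    push_cast
    rw [add_sub_cancel_right]
    field_simp
    ring

theorem sum_lurothWeight_rpow_le_of_exponent_ge {M : ℕ} {a b : ℝ} (hab : a ≤ b) :
    ∑ k ∈ Finset.Icc 2 M, lurothWeight k ^ b ≤ ∑ k ∈ Finset.Icc 2 M, lurothWeight k ^ a :=
  Finset.sum_rpow_le_sum_rpow_of_exponent_ge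
    (fun _ hk => lurothWeight_pos (Finset.mem_Icc.1 hk).1)
    (fun _ hk => lurothWeight_le_one (Finset.mem_Icc.1 hk).1) hab

theorem lt_one_of_sum_lurothWeight_rpow_eq_one {M : ℕ} (hM : 2 ≤ M) {s : ℝ}
    (hs : ∑ k ∈ Finset.Icc 2 M, lurothWeight k ^ s = 1) : s < 1 := by
  by_contra! h
  have hle := sum_lurothWeight_rpow_le_of_exponent_ge (M := M) h
  simp only [Real.rpow_one] at hle
  rw [hs, sum_lurothWeight (by omega)] at hle
  have : (0 : ℝ) < 1 / M := by positivity
  linarith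

theorem sub_inv_add_le_sum_lurothWeight_rpow {M : ℕ} (hM : 2 ≤ M) {t : ℝ} (ht : t ≤ 1) :
    1 - 1 / M + ((1 / 2 : ℝ) ^ t - 1 / 2) ≤ ∑ k ∈ Finset.Icc 2 M, lurothWeight k ^ t := by
  have := Finset.sum_add_rpow_sub_le_sum_rpow
    (fun _ hk => lurothWeight_pos (Finset.mem_Icc.1 hk).1)
    (fun _ hk => lurothWeight_le_one (Finset.mem_Icc.1 hk).1) ht
    (Finset.mem_Icc.2 ⟨le_rfl, hM⟩)
  rwa [sum_lurothWeight (by omega), lurothWeight_two] at this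

theorem lt_of_sum_lurothWeight_rpow_eq_one {M : ℕ} (hM : 2 ≤ M) {s t : ℝ} (ht : t < 1)
    (hMt : 1 / (M : ℝ) < (1 / 2 : ℝ) ^ t - 1 / 2)
    (hs : ∑ k ∈ Finset.Icc 2 M, lurothWeight k ^ s = 1) : t < s := by
  by_contra! h
  have := (sub_inv_add_le_sum_lurothWeight_rpow hM ht.le).trans
    (sum_lurothWeight_rpow_le_of_exponent_ge h)
  linarith

theorem luroth_SM_tendsto_one (S : ℕ → ℝ)
    (hS : ∀ M : ℕ, 2 ≤ M → 0 ≤ S M ∧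
      ∑ k ∈ Finset.Icc 2 M, ((1 : ℝ) / ((k : ℝ) * ((k : ℝ) - 1))) ^ (S M) = 1) :
    Tendsto S atTop (𝓝 1) := by
  have hsum (M : ℕ) (hM : 2 ≤ M) : ∑ k ∈ Finset.Icc 2 M, lurothWeight k ^ S M = 1 :=
    (hS M hM).2
  rw [tendsto_order]
  refine ⟨fun t ht => ?_, fun a ha => ?_⟩
  · have hgap : 0 < (1 / 2 : ℝ) ^ t - 1 / 2 := by
      have := Real.rpow_lt_rpow_of_exponent_gt (by norm_num : (0 : ℝ) < 1 / 2) (by norm_num) ht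
      rw [Real.rpow_one] at this
      linarith
    have hinv := tendsto_one_div_atTop_nhds_zero_nat.eventually (gt_mem_nhds hgap)
    filter_upwards [eventually_ge_atTop 2, hinv] with M hM hMt
    exact lt_of_sum_lurothWeight_rpow_eq_one hM ht hMt (hsum M hM)
  · filter_upwards [eventually_ge_atTop 2] with M hM
    exact (lt_one_of_sum_lurothWeight_rpow_eq_one hM (hsum M hM)).trans ha
end

section
/- For every ε ∈ (0,1), if M > ⌈1 + 1/(2^ε - 1)⌉ then ∑_{k=2}^{M} (1/(k(k-1)))^{1-ε} > 1, and consequently the solution S(M) of ∑_{k=2}^{M}(1/(k(k-1)))^s = 1 satisfies S(M) > 1 - ε. -/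
open Filter Topology Real Set

/-!
Each weight `a = 1/(k(k-1))` satisfies `a ≤ 1/2`, so `a ^ (1 - ε) = a * a⁻¹ ^ ε ≥ 2 ^ ε * a`.
Summing and telescoping gives `∑ a ^ (1 - ε) ≥ 2 ^ ε (1 - 1/M)`, which exceeds `1` exactly when
`M > 1 + 1/(2 ^ ε - 1)`. Since all weights lie in `(0, 1]`, the sum `∑ a ^ s` is antitone in `s`,
so it can only equal `1` for some `s > 1 - ε`.
-/

theorem sum_Icc_one_div_mul_sub_one {M : ℕ} (hM : 1 ≤ M) :
    ∑ k ∈ Finset.Icc 2 M, (1 : ℝ) / ((k : ℝ) * ((k : ℝ) - 1)) = 1 - 1 / M := by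
  induction M, hM using Nat.le_induction with
  | base => norm_num
  | succ n hn ih =>
    rw [Finset.sum_Icc_succ_top (by omega), ih]
    have hn0 : (n : ℝ) ≠ 0 := by positivity
    push_cast
    rw [add_sub_cancel_right]
    field_simp
    ring

theorem two_le_mul_sub_one {k : ℕ} (hk : 2 ≤ k) : (2 : ℝ) ≤ (k : ℝ) * ((k : ℝ) - 1) := by
  have : (2 : ℝ) ≤ k := by exact_mod_cast hk
  nlinarith

theorem one_div_mul_sub_one_mem_Ioc {k : ℕ} (hk : 2 ≤ k) :
    (1 : ℝ) / ((k : ℝ) * ((k : ℝ) - 1)) ∈ Ioc 0 1 := by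
  have := two_le_mul_sub_one hk
  exact ⟨by positivity, (div_le_one (by linarith)).mpr (by linarith)⟩

theorem rpow_mul_one_div_le_one_div_rpow_one_sub {b y ε : ℝ} (hb : 0 < b) (hy : b ≤ y)
    (hε : 0 ≤ ε) : b ^ ε * (1 / y) ≤ (1 / y) ^ (1 - ε) := by
  have hy0 : 0 < y := hb.trans_le hy
  calc b ^ ε * (1 / y) ≤ y ^ ε * (1 / y) := by gcongr
    _ = (1 / y) ^ (1 - ε) := by
      rw [rpow_sub (by positivity), rpow_one, div_rpow zero_le_one hy0.le, one_rpow]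
      field_simp

theorem one_lt_mul_one_sub_one_div {c M : ℝ} (hc : 1 < c) (hM : 1 + 1 / (c - 1) < M) :
    1 < c * (1 - 1 / M) := by
  have hc1 : 0 < c - 1 := by linarith
  have hM1 : 1 / (c - 1) < M - 1 := by linarith
  rw [div_lt_iff₀ hc1] at hM1
  have hM0 : 0 < M := by nlinarith
  rw [one_sub_div hM0.ne', ← mul_div_assoc, one_lt_div hM0]
  nlinarith

theorem Finset.sum_rpow_le_sum_rpow_of_le {ι : Type*} (s : Finset ι) {a : ι → ℝ}
    (ha0 : ∀ i ∈ s, 0 < a i) (ha1 : ∀ i ∈ s, a i ≤ 1) {t u : ℝ} (htu : t ≤ u) :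
    ∑ i ∈ s, a i ^ u ≤ ∑ i ∈ s, a i ^ t :=
  Finset.sum_le_sum fun i hi => rpow_le_rpow_of_exponent_ge (ha0 i hi) (ha1 i hi) htu

theorem luroth_SM_lower_bound (ε : ℝ) (hε : ε ∈ Set.Ioo (0 : ℝ) 1) (M : ℕ)
    (hM : (M : ℝ) > (⌈1 + 1 / ((2 : ℝ) ^ ε - 1)⌉ : ℤ)) :
    ∑ k ∈ Finset.Icc 2 M, ((1 : ℝ) / ((k : ℝ) * ((k : ℝ) - 1))) ^ (1 - ε) > 1 ∧
    ∀ s : ℝ, 0 ≤ s →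
      ∑ k ∈ Finset.Icc 2 M, ((1 : ℝ) / ((k : ℝ) * ((k : ℝ) - 1))) ^ s = 1 →
      s > 1 - ε := by
  obtain ⟨hε0, -⟩ := hε
  have h2ε : (1 : ℝ) < 2 ^ ε := one_lt_rpow (by norm_num) hε0
  have hM' : 1 + 1 / ((2 : ℝ) ^ ε - 1) < M := (Int.le_ceil _).trans_lt hM
  have hM1 : 1 ≤ M := by
    have : 0 < 1 / ((2 : ℝ) ^ ε - 1) := one_div_pos.mpr (by linarith)
    exact_mod_cast (by linarith : (1 : ℝ) ≤ M)
  have hsum : 1 < ∑ k ∈ Finset.Icc 2 M, ((1 : ℝ) / ((k : ℝ) * ((k : ℝ) - 1))) ^ (1 - ε) :=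
    calc 1 < (2 : ℝ) ^ ε * (1 - 1 / M) := one_lt_mul_one_sub_one_div h2ε hM'
      _ = ∑ k ∈ Finset.Icc 2 M, (2 : ℝ) ^ ε * (1 / ((k : ℝ) * ((k : ℝ) - 1))) := by
        rw [← Finset.mul_sum, sum_Icc_one_div_mul_sub_one hM1]
      _ ≤ _ := Finset.sum_le_sum fun k hk =>
        rpow_mul_one_div_le_one_div_rpow_one_sub two_pos
          (two_le_mul_sub_one (Finset.mem_Icc.mp hk).1) hε0.le
  refine ⟨hsum, fun s _ hs1 => ?_⟩
  by_contra! hs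
  have := (Finset.Icc 2 M).sum_rpow_le_sum_rpow_of_le
    (fun k hk => (one_div_mul_sub_one_mem_Ioc (Finset.mem_Icc.mp hk).1).1)
    (fun k hk => (one_div_mul_sub_one_mem_Ioc (Finset.mem_Icc.mp hk).1).2) hs
  linarith
end

section
/- For every real B > 1, the equation ∑_{k=2}^{∞} (1/(B·k(k-1)))^s = 1 has a unique solution s = G(B) in (1/2, 1), the function G is continuous on (1,∞), G(B) → 1 as B → 1⁺, and G(B) → 1/2 as B → ∞. -/
open Filter Topology Real Set

/-!
Write `C(s) = ∑_{k ≥ 2} (k(k-1))^{-s}`. Pulling `B^{-s}` out of the series, the equation becomes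
`ψ(s) = log B` with `ψ(s) = log C(s) / s`. On `(1/2, 1]` the series `C` is strictly decreasing
and `C ≥ C(1) = 1` (a telescoping sum), so `ψ` is strictly decreasing with `ψ(1) = 0`. Hence
`G = ψ⁻¹ ∘ log`, which gives uniqueness; continuity and both limits follow because a function
that is strictly monotone on an interval reflects convergence, whether or not it is continuous.
-/

section OrderReflection

variable {α : Type*} {l : Filter α} {S : Set ℝ} {ψ : ℝ → ℝ} {g : α → ℝ}

theorem StrictAntiOn.tendsto_of_tendsto_comp (hψ : StrictAntiOn ψ S) (hS : S.OrdConnected)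
    (hgS : ∀ᶠ x in l, g x ∈ S) {a : ℝ} (ha : a ∈ S)
    (hψg : Tendsto (ψ ∘ g) l (𝓝 (ψ a))) : Tendsto g l (𝓝 a) := by
  rw [tendsto_order]
  constructor
  · intro b hb
    by_cases hm : (b + a) / 2 ∈ S
    · have hψm : ψ a < ψ ((b + a) / 2) := hψ hm ha (by linarith)
      filter_upwards [hgS, hψg.eventually (gt_mem_nhds hψm)] with x hx hlt
      linarith [(hψ.lt_iff_gt hx hm).1 hlt]
    · filter_upwards [hgS] with x hx
      by_contra! hle
      exact hm (hS.out hx ha ⟨by linarith, by linarith⟩)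
  · intro b hb
    by_cases hm : (a + b) / 2 ∈ S
    · have hψm : ψ ((a + b) / 2) < ψ a := hψ ha hm (by linarith)
      filter_upwards [hgS, hψg.eventually (lt_mem_nhds hψm)] with x hx hlt
      linarith [(hψ.lt_iff_gt hm hx).1 hlt]
    · filter_upwards [hgS] with x hx
      by_contra! hle
      exact hm (hS.out ha hx ⟨by linarith, by linarith⟩)

theorem StrictAntiOn.eventually_lt_of_tendsto_comp_atTop (hψ : StrictAntiOn ψ S)
    (hgS : ∀ᶠ x in l, g x ∈ S) (hψg : Tendsto (ψ ∘ g) l atTop) {s : ℝ} (hs : s ∈ S) :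
    ∀ᶠ x in l, g x < s := by
  filter_upwards [hgS, hψg.eventually_gt_atTop (ψ s)] with x hx hlt
  exact (hψ.lt_iff_gt hs hx).1 hlt

end OrderReflection

noncomputable def lurothSeries (s : ℝ) : ℝ :=
  ∑' k : ℕ, (1 / (((k : ℝ) + 2) * ((k : ℝ) + 1))) ^ s

section LurothSeries

variable {s : ℝ}

lemma one_div_mul_succ_pos (k : ℕ) : 0 < 1 / (((k : ℝ) + 2) * ((k : ℝ) + 1)) := by
  positivity

lemma one_div_mul_succ_lt_one (k : ℕ) : 1 / (((k : ℝ) + 2) * ((k : ℝ) + 1)) < 1 := by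
  rw [div_lt_one (by positivity)]
  nlinarith [k.cast_nonneg (α := ℝ)]

lemma summable_lurothSeries (hs : 1 / 2 < s) :
    Summable fun k : ℕ => (1 / (((k : ℝ) + 2) * ((k : ℝ) + 1))) ^ s := by
  have hp : Summable fun k : ℕ => 1 / ((k : ℝ) + 1) ^ (2 * s) := by
    simpa using (summable_nat_add_iff 1).2 (Real.summable_one_div_nat_rpow.2 (by linarith))
  refine hp.of_nonneg_of_le (fun k => by positivity) fun k => ?_
  have hk : (0 : ℝ) < (k : ℝ) + 1 := by positivity
  calc (1 / (((k : ℝ) + 2) * ((k : ℝ) + 1))) ^ s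
      ≤ (1 / ((k : ℝ) + 1) ^ (2 : ℝ)) ^ s := by
        refine rpow_le_rpow (one_div_mul_succ_pos k).le ?_ (by linarith)
        rw [rpow_two]
        gcongr
        linarith
    _ = 1 / ((k : ℝ) + 1) ^ (2 * s) := by
        rw [div_rpow zero_le_one (by positivity), one_rpow, ← rpow_mul hk.le]

lemma lurothSeries_strictAntiOn : StrictAntiOn lurothSeries (Ioi (1 / 2)) := fun _ hs _ ht hst =>
  (summable_lurothSeries ht).tsum_lt_tsum (i := 0)
    (fun k => rpow_le_rpow_of_exponent_ge (one_div_mul_succ_pos k)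
      (one_div_mul_succ_lt_one k).le hst.le)
    (rpow_lt_rpow_of_exponent_gt (one_div_mul_succ_pos 0) (one_div_mul_succ_lt_one 0) hst)
    (summable_lurothSeries hs)

lemma lurothSeries_one : lurothSeries 1 = 1 := by
  have hterm : ∀ k : ℕ, (1 / (((k : ℝ) + 2) * ((k : ℝ) + 1))) ^ (1 : ℝ)
      = 1 / ((k : ℝ) + 1) - 1 / (((k + 1 : ℕ) : ℝ) + 1) := fun k => by
    rw [rpow_one]
    push_cast
    field_simp
    ring
  have hpartial : ∀ n : ℕ, ∑ k ∈ Finset.range n, (1 / (((k : ℝ) + 2) * ((k : ℝ) + 1))) ^ (1 : ℝ)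
      = 1 - 1 / ((n : ℝ) + 1) := fun n => by
    simp only [hterm, Finset.sum_range_sub' (fun k : ℕ => 1 / ((k : ℝ) + 1))]
    norm_num
  refine ((summable_lurothSeries (by norm_num)).hasSum_iff_tendsto_nat.2 ?_).tsum_eq
  simp only [hpartial]
  simpa using (tendsto_one_div_add_atTop_nhds_zero_nat (𝕜 := ℝ)).const_sub 1

lemma one_le_lurothSeries (hs : s ∈ Ioc (1 / 2) 1) : 1 ≤ lurothSeries s :=
  lurothSeries_one ▸ lurothSeries_strictAntiOn.antitoneOn hs.1 (by norm_num : (1 : ℝ) ∈ Ioi (1 / 2))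
    hs.2

lemma tsum_one_div_mul_mul_rpow {B : ℝ} (hB : 0 ≤ B) (s : ℝ) :
    ∑' k : ℕ, (1 / (B * ((k : ℝ) + 2) * ((k : ℝ) + 1))) ^ s = (B ^ s)⁻¹ * lurothSeries s := by
  rw [lurothSeries, ← tsum_mul_left]
  congr 1 with k
  rw [← inv_rpow hB, ← mul_rpow (inv_nonneg.2 hB) (one_div_mul_succ_pos k).le, mul_assoc,
    one_div, one_div, mul_inv]

end LurothSeries

noncomputable def lurothPsi (s : ℝ) : ℝ := log (lurothSeries s) / s

lemma lurothPsi_one : lurothPsi 1 = 0 := by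
  rw [lurothPsi, lurothSeries_one, log_one, zero_div]

lemma lurothPsi_eq_log_of_tsum_eq_one {B s : ℝ} (hB : 0 < B) (hs : s ≠ 0)
    (h : ∑' k : ℕ, (1 / (B * ((k : ℝ) + 2) * ((k : ℝ) + 1))) ^ s = 1) :
    lurothPsi s = log B := by
  rw [tsum_one_div_mul_mul_rpow hB.le, inv_mul_eq_one₀ (rpow_pos_of_pos hB s).ne'] at h
  rw [lurothPsi, ← h, log_rpow hB, mul_div_cancel_left₀ _ hs]

lemma lurothPsi_strictAntiOn : StrictAntiOn lurothPsi (Ioc (1 / 2) 1) := by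
  intro s hs t ht hst
  have hs0 : 0 < s := by linarith [hs.1]
  have hlog_nonneg : 0 ≤ log (lurothSeries t) := log_nonneg (one_le_lurothSeries ht)
  have hlog_lt : log (lurothSeries t) < log (lurothSeries s) :=
    log_lt_log (by linarith [one_le_lurothSeries ht]) (lurothSeries_strictAntiOn hs.1 ht.1 hst)
  calc log (lurothSeries t) / t ≤ log (lurothSeries t) / s := by gcongr
    _ < log (lurothSeries s) / s := by gcongr

section Solution

variable {G : ℝ → ℝ}

lemma tendsto_nhdsWithin_Ioi_of_lurothPsi_eq_log
    (hG : ∀ B : ℝ, 1 < B → G B ∈ Ioc (1 / 2 : ℝ) 1 ∧ lurothPsi (G B) = log B)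
    {B₀ a : ℝ} (hB₀ : 1 ≤ B₀) (ha : a ∈ Ioc (1 / 2 : ℝ) 1) (haB₀ : lurothPsi a = log B₀) :
    Tendsto G (𝓝[Ioi 1] B₀) (𝓝 a) := by
  have hGS : ∀ᶠ B in 𝓝[Ioi 1] B₀, G B ∈ Ioc (1 / 2 : ℝ) 1 :=
    eventually_nhdsWithin_of_forall fun B hB => (hG B hB).1
  have hψG : log =ᶠ[𝓝[Ioi 1] B₀] lurothPsi ∘ G :=
    eventually_nhdsWithin_of_forall fun B hB => (hG B hB).2.symm
  refine lurothPsi_strictAntiOn.tendsto_of_tendsto_comp ordConnected_Ioc hGS ha ?_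
  rw [haB₀]
  exact ((continuousAt_log (by linarith)).tendsto.mono_left nhdsWithin_le_nhds).congr' hψG

lemma tendsto_atTop_of_lurothPsi_eq_log
    (hG : ∀ B : ℝ, 1 < B → G B ∈ Ioc (1 / 2 : ℝ) 1 ∧ lurothPsi (G B) = log B) :
    Tendsto G atTop (𝓝 (1 / 2)) := by
  have hGS : ∀ᶠ B in atTop, G B ∈ Ioc (1 / 2 : ℝ) 1 :=
    (eventually_gt_atTop 1).mono fun B hB => (hG B hB).1
  have hψG : Tendsto (lurothPsi ∘ G) atTop atTop :=
    tendsto_log_atTop.congr' ((eventually_gt_atTop 1).mono fun B hB => (hG B hB).2.symm)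
  refine tendsto_order.2 ⟨fun b hb => hGS.mono fun B hB => hb.trans hB.1, fun b hb => ?_⟩
  have hb' : min b 1 ∈ Ioc (1 / 2 : ℝ) 1 := ⟨lt_min hb (by norm_num), min_le_right b 1⟩
  filter_upwards [lurothPsi_strictAntiOn.eventually_lt_of_tendsto_comp_atTop hGS hψG hb']
    with B hB using hB.trans_le (min_le_left b 1)

end Solution

theorem luroth_GB_properties (G : ℝ → ℝ)
    (hG : ∀ B : ℝ, 1 < B → G B ∈ Set.Ioo (1/2 : ℝ) 1 ∧
      ∑' k : ℕ, ((1 : ℝ) / (B * ((k : ℝ) + 2) * ((k : ℝ) + 1))) ^ (G B) = 1) :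
    (∀ B : ℝ, 1 < B → ∃! s : ℝ, s ∈ Set.Ioo (1/2 : ℝ) 1 ∧
      ∑' k : ℕ, ((1 : ℝ) / (B * ((k : ℝ) + 2) * ((k : ℝ) + 1))) ^ s = 1) ∧
    ContinuousOn G (Set.Ioi 1) ∧
    Tendsto G (nhdsWithin 1 (Set.Ioi 1)) (𝓝 1) ∧
    Tendsto G atTop (𝓝 (1/2)) := by
  have hψ_eq {B s : ℝ} (hB : 1 < B) (hs : s ∈ Ioo (1 / 2 : ℝ) 1)
      (h : ∑' k : ℕ, (1 / (B * ((k : ℝ) + 2) * ((k : ℝ) + 1))) ^ s = 1) : lurothPsi s = log B :=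
    lurothPsi_eq_log_of_tsum_eq_one (by linarith) (by linarith [hs.1]) h
  have hGψ : ∀ B : ℝ, 1 < B → G B ∈ Ioc (1 / 2 : ℝ) 1 ∧ lurothPsi (G B) = log B :=
    fun B hB => ⟨Ioo_subset_Ioc_self (hG B hB).1, hψ_eq hB (hG B hB).1 (hG B hB).2⟩
  refine ⟨fun B hB => ⟨G B, hG B hB, fun s hs => ?_⟩, fun B hB => ?_, ?_,
    tendsto_atTop_of_lurothPsi_eq_log hGψ⟩
  · exact lurothPsi_strictAntiOn.injOn (Ioo_subset_Ioc_self hs.1) (hGψ B hB).1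
      ((hψ_eq hB hs.1 hs.2).trans (hGψ B hB).2.symm)
  · exact tendsto_nhdsWithin_Ioi_of_lurothPsi_eq_log hGψ hB.le (hGψ B hB).1 (hGψ B hB).2
  · exact tendsto_nhdsWithin_Ioi_of_lurothPsi_eq_log hGψ le_rfl (by norm_num)
      (by rw [lurothPsi_one, log_one])
end
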